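/- arXiv:1808.05918 — 2 statements merged into one kernel-verified Lean document; each statement's English description precedes it below -/
import Mathlib

section
/- Let w be a non-identity Grassmannian permutation with unique descent at k and let (p,q) be in the coessential set of v_Q(w) with q < k (respectively q > k). Then the rank number satisfies r_{p,q}(v_Q(w)) = q (respectively r_{p,q}(v_Q(w)) = p); i.e. the Schubert variety X_w^Q is defined by inclusions. -/
open Equiv

/-- `w` is a Grassmannian permutation of `{1, …, n}` with unique descent at `k`:
`w` fixes everything outside `[1, n]`, is increasing on `[1, k]` and on `[k+1, n]`,
and has a descent at `k`. -/
def IsGrassmannian (n k : ℕ) (w : Equiv.Perm ℕ) : Prop :=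
  (∀ i, i ∉ Set.Icc 1 n → w i = i) ∧
  (∀ i j, 1 ≤ i → i < j → j ≤ k → w i < w j) ∧
  (∀ i j, k + 1 ≤ i → i < j → j ≤ n → w i < w j) ∧
  w (k + 1) < w k

/-- The rank number `r_{p,q}(v) = #{j ≤ q : v(j) ≤ p}`. -/
def rankNum (v : Equiv.Perm ℕ) (p q : ℕ) : ℕ :=
  ((Finset.Icc 1 q).filter (fun j => v j ≤ p)).card

/-- Fulton's coessential set of a permutation of `{1, …, n}`:
`Coess(v) = {(p,q) : v⁻¹(p) ≤ q < v⁻¹(p+1) and v(q) ≤ p < v(q+1)}`,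
with `1 ≤ p, q ≤ n - 1`. -/
def Coess (n : ℕ) (v : Equiv.Perm ℕ) : Set (ℕ × ℕ) :=
  {pq | 1 ≤ pq.1 ∧ pq.1 < n ∧ 1 ≤ pq.2 ∧ pq.2 < n ∧
    v⁻¹ pq.1 ≤ pq.2 ∧ pq.2 < v⁻¹ (pq.1 + 1) ∧
    v pq.2 ≤ pq.1 ∧ pq.1 < v (pq.2 + 1)}

/-- The parabolic subgroup of permutations generated by the adjacent transpositions
`(j, j+1)` for `j ∈ S`. -/
def permParabolic (S : Set ℕ) : Subgroup (Equiv.Perm ℕ) :=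
  Subgroup.closure ((fun j => Equiv.swap j (j + 1)) '' S)

/-- `v` is the maximal length representative of the coset `w · W_S`: it lies in the
coset and has a descent at every position of `S`. -/
def IsMaxRep (S : Set ℕ) (w v : Equiv.Perm ℕ) : Prop :=
  (∃ u ∈ permParabolic S, v = w * u) ∧ ∀ j ∈ S, v (j + 1) < v j

/-- The positions of the simple roots generating the maximal parabolic `P` with
`W_P = S_k × S_{n-k}`. -/
def SP (n k : ℕ) : Set ℕ := {j | 1 ≤ j ∧ j < n ∧ j ≠ k}

/-- The positions `j` of the simple roots `α_j ∈ Δ_w = {α_j : w(j+1) = w(j)+1, j ≠ k}`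
generating the parabolic subgroup `Q`. -/
def DeltaW (n k : ℕ) (w : Equiv.Perm ℕ) : Set ℕ :=
  {j | 1 ≤ j ∧ j < n ∧ j ≠ k ∧ w (j + 1) = w j + 1}

/-!
Write `v = w * u` with `u` in the parabolic subgroup `W_Q`. For every position `m ∉ Δ_w`,
`u` preserves `{x ≤ m}`, so `u` permutes each block `(a, b]` with `a, b ∉ Δ_w`. The ascent
of `v` at `q` forces `q ∉ Δ_w`, so `u` permutes `[1, q]`: the rank numbers of `v` and `w` at
`(p, q)` agree, and `w⁻¹ p ≤ q < w⁻¹ (p + 1)`. Since `w (j + 1) = w j + 1` for `j ∈ Δ_w`,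
the ends of the blocks `(w⁻¹ p, q]` (when `q ≤ k`) and `(q, w⁻¹ (p + 1) - 1]` (when `k < q`)
are not in `Δ_w`; comparing `v q ≤ p < v (q + 1)` with the values of `w` on these blocks gives
`w q ≤ p`, resp. `p < w (q + 1)`. Monotonicity of `w` on `[1, k]` and on `[k + 1, n]` turns
these into rank `q`, resp. `p`.
-/

open Equiv

section Parabolic

variable {S : Set ℕ} {u : Perm ℕ}

theorem apply_le_iff_of_mem_permParabolic (hu : u ∈ permParabolic S) {m : ℕ} (hm : m ∉ S)
    (x : ℕ) : u x ≤ m ↔ x ≤ m := by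
  induction hu using Subgroup.closure_induction generalizing x with
  | mem g hg =>
    obtain ⟨j, hj, rfl⟩ := hg
    have hjm : j ≠ m := fun h => hm (h ▸ hj)
    rcases eq_or_ne x j with rfl | h1
    · rw [swap_apply_left]; omega
    rcases eq_or_ne x (j + 1) with rfl | h2
    · rw [swap_apply_right]; omega
    · rw [swap_apply_of_ne_of_ne h1 h2]
  | one => rfl
  | mul a b _ _ ha hb => rw [Perm.mul_apply, ha, hb]
  | inv a _ ha => simpa using (ha (a⁻¹ x)).symm

theorem inv_apply_le_iff_of_mem_permParabolic (hu : u ∈ permParabolic S) {m : ℕ}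
    (hm : m ∉ S) (x : ℕ) : u⁻¹ x ≤ m ↔ x ≤ m :=
  apply_le_iff_of_mem_permParabolic (inv_mem hu) hm x

theorem apply_mem_Ioc_iff_of_mem_permParabolic (hu : u ∈ permParabolic S) {a b : ℕ}
    (ha : a ∉ S) (hb : b ∉ S) (x : ℕ) : u x ∈ Set.Ioc a b ↔ x ∈ Set.Ioc a b := by
  simp only [Set.mem_Ioc, ← not_le, apply_le_iff_of_mem_permParabolic hu ha,
    apply_le_iff_of_mem_permParabolic hu hb]

end Parabolic

section RankNum

variable {v : Perm ℕ} {p q : ℕ}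

theorem rankNum_le_right : rankNum v p q ≤ q := by
  rw [rankNum]
  simpa using Finset.card_filter_le (Finset.Icc 1 q) (fun j => v j ≤ p)

theorem rankNum_le_left (hv : v 0 = 0) : rankNum v p q ≤ p := by
  have hmaps : Set.MapsTo v ((Finset.Icc 1 q).filter (fun j => v j ≤ p)) (Finset.Icc 1 p) := by
    intro j hj
    simp only [Finset.mem_coe, Finset.mem_filter, Finset.mem_Icc] at hj ⊢
    refine ⟨Nat.one_le_iff_ne_zero.mpr fun h => ?_, hj.2⟩
    have : j = 0 := v.injective (h.trans hv.symm)
    omega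
  rw [rankNum]
  simpa using Finset.card_le_card_of_injOn v hmaps v.injective.injOn

theorem rankNum_eq_right (h : ∀ j ∈ Finset.Icc 1 q, v j ≤ p) : rankNum v p q = q := by
  rw [rankNum, Finset.filter_true_of_mem h, Nat.card_Icc, Nat.add_sub_cancel]

theorem rankNum_eq_left (hv : v 0 = 0) (h : ∀ m ≤ p, v⁻¹ m ≤ q) : rankNum v p q = p := by
  refine le_antisymm (rankNum_le_left hv) ?_
  have hmaps : Set.MapsTo ⇑v⁻¹ (Finset.Icc 1 p) ((Finset.Icc 1 q).filter (fun j => v j ≤ p)) := by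
    intro m hm
    simp only [Finset.mem_coe, Finset.mem_filter, Finset.mem_Icc, Perm.coe_inv,
      apply_symm_apply] at hm ⊢
    refine ⟨⟨Nat.one_le_iff_ne_zero.mpr fun h0 => ?_, h m hm.2⟩, hm.2⟩
    have : m = 0 := by simpa [hv] using congrArg v h0
    omega
  rw [rankNum]
  simpa using Finset.card_le_card_of_injOn (⇑v⁻¹) hmaps v⁻¹.injective.injOn

theorem rankNum_mul_of_mem_permParabolic {S : Set ℕ} {u : Perm ℕ} (hu : u ∈ permParabolic S)
    (h0 : 0 ∉ S) (hq : q ∉ S) {w : Perm ℕ} : rankNum (w * u) p q = rankNum w p q := by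
  have hIcc : (Finset.Icc 1 q).map u.toEmbedding = Finset.Icc 1 q := by
    ext x
    have := apply_mem_Ioc_iff_of_mem_permParabolic (inv_mem hu) h0 hq x
    simp only [Finset.mem_map_equiv, Finset.mem_Icc, Set.mem_Ioc] at this ⊢
    rw [← Perm.inv_def]
    omega
  rw [rankNum, rankNum]
  conv_rhs => rw [← hIcc, Finset.filter_map, Finset.card_map]
  rfl

end RankNum

section Grassmannian

variable {n k : ℕ} {w u : Perm ℕ} {p q : ℕ}

theorem IsGrassmannian.apply_zero (hG : IsGrassmannian n k w) : w 0 = 0 :=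
  hG.1 0 (by simp)

theorem IsGrassmannian.strictMonoOn_left (hG : IsGrassmannian n k w) :
    StrictMonoOn w (Set.Icc 1 k) :=
  fun i hi j hj hij => hG.2.1 i j hi.1 hij hj.2

theorem IsGrassmannian.strictMonoOn_right (hG : IsGrassmannian n k w) :
    StrictMonoOn w (Set.Icc (k + 1) n) :=
  fun i hi j hj hij => hG.2.2.1 i j hi.1 hij hj.2

theorem apply_succ_of_mem_DeltaW {j : ℕ} (hj : j ∈ DeltaW n k w) : w (j + 1) = w j + 1 :=
  hj.2.2.2

theorem IsGrassmannian.inv_apply_le_of_lt_apply_succ (hG : IsGrassmannian n k w)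
    (hkq : k ≤ q) (hpn : p ≤ n) (h : p < w (q + 1)) (m : ℕ) (hm : m ≤ p) : w⁻¹ m ≤ q := by
  by_contra! hqm
  have hwm : w (w⁻¹ m) = m := w.apply_symm_apply m
  by_cases hmn : w⁻¹ m ≤ n
  · have := hG.strictMonoOn_right.monotoneOn ⟨by omega, by omega⟩ ⟨by omega, hmn⟩
      (show q + 1 ≤ w⁻¹ m by omega)
    omega
  · have := hG.1 (w⁻¹ m) (by simp only [Set.mem_Icc]; omega)
    omega

theorem IsGrassmannian.apply_le_of_le_left (hG : IsGrassmannian n k w)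
    (hu : u ∈ permParabolic (DeltaW n k w)) (hq : q ∉ DeltaW n k w) (hqk : q ≤ k)
    (hp : 1 ≤ p) (hwp : w⁻¹ p ≤ q) (hwp1 : q < w⁻¹ (p + 1)) (hvq : w (u q) ≤ p) :
    w q ≤ p := by
  set a := w⁻¹ p
  have hwa : w a = p := w.apply_symm_apply p
  rcases hwp.eq_or_lt with haq | haq
  · rw [← haq, hwa]
  exfalso
  have ha1 : 1 ≤ a := Nat.one_le_iff_ne_zero.mpr fun h => by
    rw [h, hG.apply_zero] at hwa
    omega
  have haS : a ∉ DeltaW n k w := fun haS => by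
    have : w⁻¹ (p + 1) = a + 1 :=
      Perm.inv_eq_iff_eq.mpr (by rw [apply_succ_of_mem_DeltaW haS, hwa])
    omega
  obtain ⟨hauq, huq⟩ :=
    (apply_mem_Ioc_iff_of_mem_permParabolic hu haS hq q).mpr ⟨haq, le_rfl⟩
  have := hG.strictMonoOn_left ⟨ha1, by omega⟩ ⟨by omega, by omega⟩ hauq
  omega

theorem IsGrassmannian.lt_apply_succ_of_lt_right (hG : IsGrassmannian n k w)
    (hu : u ∈ permParabolic (DeltaW n k w)) (hq : q ∉ DeltaW n k w) (hkq : k < q)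
    (hpn : p < n) (hwp : w⁻¹ p ≤ q) (hwp1 : q < w⁻¹ (p + 1)) (hvq : p < w (u (q + 1))) :
    p < w (q + 1) := by
  by_contra! hwq
  set t := w⁻¹ (p + 1)
  have hwt : w t = p + 1 := w.apply_symm_apply (p + 1)
  have htn : t ≤ n := by
    by_contra! htn
    have := hG.1 t (by simp only [Set.mem_Icc]; omega)
    omega
  have hqt : q + 1 < t := by
    rcases (show q + 1 ≤ t by omega).eq_or_lt with h | h
    · rw [← h] at hwt; omega
    · exact h
  have hwt1 : w (t - 1) ≤ p := by
    have := hG.strictMonoOn_right ⟨by omega, by omega⟩ ⟨by omega, htn⟩ (show t - 1 < t by omega)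
    omega
  by_cases htS : t - 1 ∈ DeltaW n k w
  · have h := apply_succ_of_mem_DeltaW htS
    rw [Nat.sub_add_cancel (by omega), hwt] at h
    have : w⁻¹ p = t - 1 := Perm.inv_eq_iff_eq.mpr (by omega)
    omega
  obtain ⟨hqu, hut⟩ :=
    (apply_mem_Ioc_iff_of_mem_permParabolic hu hq htS (q + 1)).mpr ⟨by omega, by omega⟩
  have := hG.strictMonoOn_right.monotoneOn ⟨by omega, by omega⟩ ⟨by omega, by omega⟩ hut
  omega

end Grassmannian

theorem XwQ_defined_by_inclusions_general
    (n k : ℕ) (w v : Equiv.Perm ℕ)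
    (hG : IsGrassmannian n k w)
    (hv : IsMaxRep (DeltaW n k w) w v) :
    ∀ p q, (p, q) ∈ Coess n v →
      (q < k → rankNum v p q = q) ∧
      (k < q → rankNum v p q = p) ∧
      rankNum v p q = min p q := by
  intro p q ⟨hp1, hpn, _, _, hvp, hvp1, hvq, hvq1⟩
  obtain ⟨⟨u, hu, rfl⟩, hdes⟩ := hv
  have h0 : 0 ∉ DeltaW n k w := fun h => by simp [DeltaW] at h
  have hq : q ∉ DeltaW n k w := fun h => (hdes q h).not_ge (hvq.trans hvq1.le)
  have hwp : w⁻¹ p ≤ q := (inv_apply_le_iff_of_mem_permParabolic hu hq (w⁻¹ p)).mp hvp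
  have hwp1 : q < w⁻¹ (p + 1) := lt_of_not_ge fun h =>
    hvp1.not_ge ((inv_apply_le_iff_of_mem_permParabolic hu hq (w⁻¹ (p + 1))).mpr h)
  rw [rankNum_mul_of_mem_permParabolic hu h0 hq]
  rcases le_or_gt q k with hqk | hkq
  · have hwq := hG.apply_le_of_le_left hu hq hqk hp1 hwp hwp1 hvq
    have hrank : rankNum w p q = q := rankNum_eq_right fun j hj => by
      rw [Finset.mem_Icc] at hj
      exact (hG.strictMonoOn_left.monotoneOn ⟨hj.1, by omega⟩ ⟨by omega, hqk⟩ hj.2).trans hwq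
    have := rankNum_le_left (p := p) (q := q) hG.apply_zero
    exact ⟨fun _ => hrank, fun h => absurd h (by omega), by omega⟩
  · have hwq := hG.lt_apply_succ_of_lt_right hu hq hkq hpn hwp hwp1 hvq1
    have hrank : rankNum w p q = p :=
      rankNum_eq_left hG.apply_zero (hG.inv_apply_le_of_lt_apply_succ hkq.le hpn.le hwq)
    have := rankNum_le_right (v := w) (p := p) (q := q)
    exact ⟨fun h => absurd h (by omega), fun _ => hrank, by omega⟩

/-- Let `w` be a non-identity Grassmannian permutation with unique
descent at `k` and `v = v_Q(w)` the maximal representative of `w·W_Q`.  For every box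
`(p, q)` in the coessential set of `v`, if `q < k` then `r_{p,q}(v) = q`, and if
`q > k` then `r_{p,q}(v) = p`; i.e. the Schubert variety `X_w^Q` is defined by
inclusions (`r_{p,q}(v) = min(p,q)` on all coessential boxes). -/
theorem XwQ_defined_by_inclusions
    (n k : ℕ) (w v : Equiv.Perm ℕ)
    (hk1 : 1 ≤ k) (hkn : k < n)
    (hG : IsGrassmannian n k w) (hne : w ≠ 1)
    (hv : IsMaxRep (DeltaW n k w) w v) :
    ∀ p q, (p, q) ∈ Coess n v →
      (q < k → rankNum v p q = q) ∧
      (k < q → rankNum v p q = p) ∧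
      rankNum v p q = min p q :=
  XwQ_defined_by_inclusions_general n k w v hG hv
end

section
/- Let w ∈ S_n be Grassmannian with unique descent at k and define the partition λ(w) by λ_{k−i+1} = w(i) − i for 1 ≤ i ≤ k. Then the coessential set of v_P(w) equals {(k − c + λ_{c+1}, k) : c is an inner corner of λ(w)}, and the corresponding rank numbers satisfy r_{k−c+λ_{c+1}, k} = k − c. Here c ∈ {1,…,k−1} is an inner corner when λ_c > λ_{c+1}, and c = 0 is an inner corner when λ_1 < n − k (with λ_{1} read for c = 0). -/
open Equiv

/-- The partition `λ(w)` of a Grassmannian permutation `w` with descent at `k`: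
`λ_{k−i+1} = w(i) − i` for `1 ≤ i ≤ k`, i.e. `λ_j = w(k+1−j) − (k+1−j)`. -/
def lamOf (k : ℕ) (w : Equiv.Perm ℕ) (j : ℕ) : ℕ :=
  w (k + 1 - j) - (k + 1 - j)

/-- `c` is an inner corner of `λ(w)`: either `1 ≤ c ≤ k−1` and `λ_c > λ_{c+1}`, or
`c = 0` and `λ_1 < n − k`. -/
def IsInnerCorner (n k : ℕ) (w : Equiv.Perm ℕ) (c : ℕ) : Prop :=
  (c = 0 ∧ lamOf k w 1 < n - k) ∨
  (1 ≤ c ∧ c < k ∧ lamOf k w (c + 1) < lamOf k w c)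

/-!
Write the maximal representative as `v = w * u` with `u` in the parabolic subgroup. Such a `u`
permutes each of the blocks `[1, k]` and `[k + 1, n]`, so `v` takes the same values as `w` on
each block; and `v` is decreasing on both blocks, so its only ascent is at `k`. Hence `(p, q)`
is coessential for `v` exactly when `q = k`, `p` is a value of `w` on `[1, k]` and `p + 1` a
value of `w` on `[k + 1, n]`. As `w` is increasing on `[1, k]`, a value `p = w i` qualifies
exactly when `w i < n` and, for `i < k`, `w (i + 1) ≠ w i + 1`: this is the inner corner
condition at `c = k - i`, and `k - c + λ_{c+1} = i + (w i - i) = p`. The rank number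
`r_{w i, k}(v)` counts the values of `w` on `[1, k]` that are at most `w i`, that is `i`.
-/

open Set MulAction
open scoped Pointwise

theorem Equiv.Perm.mem_stabilizer_set_iff {α : Type*} {f : Perm α} {s : Set α} :
    f ∈ stabilizer (Perm α) s ↔ ∀ x, f x ∈ s ↔ x ∈ s :=
  mem_stabilizer_set

theorem Equiv.Perm.mem_stabilizer_of_forall_notMem {α : Type*} {f : Perm α} {s : Set α}
    (h : ∀ x ∉ s, f x = x) : f ∈ stabilizer (Perm α) s := by
  refine mem_stabilizer_set_iff.2 fun x => ⟨fun hfx => ?_, fun hx => ?_⟩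
  · by_contra hx
    exact hx (h x hx ▸ hfx)
  · by_contra hfx
    exact hfx (by rwa [f.injective (h _ hfx)])

theorem antitoneOn_Icc_of_succ_le {α : Type*} [Preorder α] {f : ℕ → α} {a b : ℕ}
    (hf : ∀ m, a ≤ m → m < b → f (m + 1) ≤ f m) : AntitoneOn f (Icc a b) := by
  rintro i ⟨hai, -⟩ j ⟨-, hjb⟩ hij
  induction j, hij using Nat.le_induction with
  | base => exact le_rfl
  | succ j hij ih => exact (hf j (hai.trans hij) hjb).trans (ih (by omega))

theorem StrictMonoOn.eq_add_one_of_apply_eq_add_one {f : ℕ → ℕ} {a b i j : ℕ}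
    (hf : StrictMonoOn f (Icc a b)) (hi : i ∈ Icc a b) (hj : j ∈ Icc a b)
    (hfij : f j = f i + 1) : j = i + 1 := by
  have hij : i < j := (hf.lt_iff_lt hi hj).1 (by omega)
  by_contra hne
  have hi' : i + 1 ∈ Icc a b := ⟨by linarith [hi.1], by linarith [hj.2]⟩
  have := hf hi hi' (lt_add_one i)
  have := hf hi' hj (by omega)
  omega

theorem permParabolic_le_stabilizer_Icc {S : Set ℕ} {a b : ℕ}
    (h : ∀ j ∈ S, j + 1 ≠ a ∧ j ≠ b) : permParabolic S ≤ stabilizer (Perm ℕ) (Icc a b) := by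
  refine (Subgroup.closure_le _).2 ?_
  rintro _ ⟨j, hj, rfl⟩
  refine Perm.mem_stabilizer_set_iff.2 fun x => ?_
  have := h j hj
  simp only [swap_apply_def, mem_Icc]
  split_ifs <;> omega

theorem rankNum_mul_of_mem_stabilizer {w u : Perm ℕ} {q : ℕ}
    (hu : u ∈ stabilizer (Perm ℕ) (Icc 1 q)) (p : ℕ) :
    rankNum (w * u) p q = rankNum w p q := by
  have hu' := Perm.mem_stabilizer_set_iff.1 hu
  have hu_inv := Perm.mem_stabilizer_set_iff.1 (inv_mem hu)
  refine Finset.card_bij' (fun x _ => u x) (fun x _ => u⁻¹ x) (fun x hx => ?_) (fun x hx => ?_)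
    (fun x _ => u.symm_apply_apply x) (fun x _ => u.apply_symm_apply x)
  · obtain ⟨hxq, hwx⟩ := Finset.mem_filter.1 hx
    exact Finset.mem_filter.2 ⟨Finset.mem_Icc.2 ((hu' x).2 (Finset.mem_Icc.1 hxq)), hwx⟩
  · obtain ⟨hxq, hwx⟩ := Finset.mem_filter.1 hx
    exact Finset.mem_filter.2
      ⟨Finset.mem_Icc.2 ((hu_inv x).2 (Finset.mem_Icc.1 hxq)), by simpa using hwx⟩

theorem rankNum_apply_of_strictMonoOn {w : Perm ℕ} {k i : ℕ} (hw : StrictMonoOn w (Icc 1 k))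
    (hi : i ∈ Icc 1 k) : rankNum w (w i) k = i := by
  have hfilter : (Finset.Icc 1 k).filter (fun j => w j ≤ w i) = Finset.Icc 1 i := by
    ext j
    simp only [Finset.mem_filter, Finset.mem_Icc]
    constructor
    · rintro ⟨hj, hji⟩
      exact ⟨hj.1, (hw.le_iff_le hj hi).1 hji⟩
    · rintro ⟨hj1, hji⟩
      have hj : j ∈ Icc 1 k := ⟨hj1, hji.trans hi.2⟩
      exact ⟨hj, (hw.le_iff_le hj hi).2 hji⟩
  rw [rankNum, hfilter, Nat.card_Icc, Nat.add_sub_cancel]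

theorem mem_coess_iff {n k : ℕ} {v : Perm ℕ} (hk1 : 1 ≤ k) (hkn : k < n)
    (hv : v ∈ stabilizer (Perm ℕ) (Icc 1 n)) (hdesc : ∀ j ∈ SP n k, v (j + 1) < v j)
    (p q : ℕ) :
    (p, q) ∈ Coess n v ↔ q = k ∧ v⁻¹ p ∈ Icc 1 k ∧ v⁻¹ (p + 1) ∈ Icc (k + 1) n := by
  have hv_inv := Perm.mem_stabilizer_set_iff.1 (inv_mem hv)
  have hleft : AntitoneOn v (Icc 1 k) :=
    antitoneOn_Icc_of_succ_le fun m (h1 : 1 ≤ m) (h2 : m < k) =>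
      (hdesc m ⟨h1, by omega, by omega⟩).le
  have hright : AntitoneOn v (Icc (k + 1) n) :=
    antitoneOn_Icc_of_succ_le fun m (h1 : k + 1 ≤ m) (h2 : m < n) =>
      (hdesc m ⟨by omega, h2, by omega⟩).le
  simp only [Coess, mem_ofPred_eq]
  constructor
  · rintro ⟨hp1, hpn, hq1, hqn, hpq, hqp, hvq, hvq1⟩
    obtain rfl : q = k := by
      by_contra hqk
      exact (hdesc q ⟨hq1, hqn, hqk⟩).not_gt (hvq.trans_lt hvq1)
    have h1 := (hv_inv p).2 ⟨hp1, hpn.le⟩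
    have h2 := (hv_inv (p + 1)).2 ⟨by omega, hpn⟩
    exact ⟨rfl, ⟨h1.1, hpq⟩, hqp, h2.2⟩
  · rintro ⟨rfl, hpA, hpB⟩
    have h1 := (hv_inv p).1 (Icc_subset_Icc_right hkn.le hpA)
    have h2 := (hv_inv (p + 1)).1 (Icc_subset_Icc_left (by omega) hpB)
    have hvk := hleft hpA ⟨hk1, le_rfl⟩ hpA.2
    have hvk1 := hright ⟨le_rfl, hkn⟩ hpB hpB.1
    simp only [Perm.coe_inv, apply_symm_apply] at hvk hvk1
    exact ⟨h1.1, h2.2, hk1, hkn, hpA.2, hpB.1, hvk, hvk1⟩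

theorem IsInnerCorner.lt {n k c : ℕ} {w : Perm ℕ} (hk : 1 ≤ k) (hc : IsInnerCorner n k w c) :
    c < k := by
  rcases hc with ⟨rfl, -⟩ | ⟨-, hck, -⟩ <;> omega

namespace IsGrassmannian

variable {n k : ℕ} {w : Perm ℕ}

theorem mem_stabilizer (hG : IsGrassmannian n k w) : w ∈ stabilizer (Perm ℕ) (Icc 1 n) :=
  Perm.mem_stabilizer_of_forall_notMem hG.1

theorem strictMonoOn_left_s17 (hG : IsGrassmannian n k w) : StrictMonoOn w (Icc 1 k) :=
  fun i hi j hj hij => hG.2.1 i j hi.1 hij hj.2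

theorem le_apply (hG : IsGrassmannian n k w) {i : ℕ} (hi : i ∈ Icc 1 k) : i ≤ w i := by
  obtain ⟨hi1, hik⟩ := hi
  induction i, hi1 using Nat.le_induction with
  | base =>
    have hw0 : w 0 = 0 := hG.1 0 fun h => by simp at h
    exact Nat.one_le_iff_ne_zero.2 fun h => one_ne_zero (w.injective (h.trans hw0.symm))
  | succ i hi ih =>
    have hmono := hG.strictMonoOn_left_s17 ⟨hi, by omega⟩ ⟨by omega, hik⟩ (lt_add_one i)
    exact (ih (by omega)).trans_lt hmono

theorem sub_add_lamOf (hG : IsGrassmannian n k w) {c : ℕ} (hc : c < k) :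
    k - c + lamOf k w (c + 1) = w (k - c) := by
  have := hG.le_apply ⟨Nat.le_sub_of_add_le (by omega), Nat.sub_le k c⟩
  rw [lamOf, show k + 1 - (c + 1) = k - c by omega]
  omega

theorem isInnerCorner_sub_iff (hG : IsGrassmannian n k w) (hkn : k ≤ n) {i : ℕ}
    (hi : i ∈ Icc 1 k) :
    IsInnerCorner n k w (k - i) ↔ w i < n ∧ (i < k → w (i + 1) ≠ w i + 1) := by
  have hwi := hG.le_apply hi
  obtain ⟨hi1, hik⟩ := hi
  unfold IsInnerCorner lamOf
  rcases hik.lt_or_eq with hik | rfl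
  · have hmono : w i < w (i + 1) :=
      hG.strictMonoOn_left_s17 ⟨hi1, hik.le⟩ ⟨by omega, hik⟩ (lt_add_one i)
    have hwn : w (i + 1) ≤ n :=
      ((Perm.mem_stabilizer_set_iff.1 hG.mem_stabilizer (i + 1)).2 ⟨by omega, by omega⟩).2
    rw [show k + 1 - (k - i + 1) = i by omega, show k + 1 - (k - i) = i + 1 by omega]
    omega
  · rw [Nat.sub_self, show i + 1 - (0 + 1) = i by omega]
    omega

theorem inv_succ_mem_right_iff (hG : IsGrassmannian n k w) {i : ℕ} (hi : i ∈ Icc 1 k) :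
    w⁻¹ (w i + 1) ∈ Icc (k + 1) n ↔ w i < n ∧ (i < k → w (i + 1) ≠ w i + 1) := by
  have hw_inv := Perm.mem_stabilizer_set_iff.1 (inv_mem hG.mem_stabilizer) (w i + 1)
  have hj : w (w⁻¹ (w i + 1)) = w i + 1 := w.apply_symm_apply _
  constructor
  · intro hjB
    have hjN := hw_inv.1 (Icc_subset_Icc_left (by omega) hjB)
    refine ⟨hjN.2, fun hik hsucc => ?_⟩
    have := w.injective (hj.trans hsucc.symm)
    exact absurd hjB.1 (by omega)
  · rintro ⟨hwi, hgap⟩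
    obtain ⟨hj1, hjn⟩ := hw_inv.2 ⟨by omega, hwi⟩
    refine ⟨?_, hjn⟩
    by_contra hjk
    have hjA : w⁻¹ (w i + 1) ∈ Icc 1 k := ⟨hj1, by omega⟩
    have := hG.strictMonoOn_left_s17.eq_add_one_of_apply_eq_add_one hi hjA hj
    exact hgap (by omega) (this ▸ hj)

theorem inv_mem_Icc_iff_exists_isInnerCorner (hG : IsGrassmannian n k w) (hk1 : 1 ≤ k)
    (hkn : k ≤ n) (p : ℕ) :
    w⁻¹ p ∈ Icc 1 k ∧ w⁻¹ (p + 1) ∈ Icc (k + 1) n ↔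
      ∃ c, IsInnerCorner n k w c ∧ p = k - c + lamOf k w (c + 1) := by
  constructor
  · rintro ⟨hi, hj⟩
    have hp : w (w⁻¹ p) = p := w.apply_symm_apply p
    set i := w⁻¹ p
    rw [← hp] at hj
    refine ⟨k - i, (hG.isInnerCorner_sub_iff hkn hi).2 ((hG.inv_succ_mem_right_iff hi).1 hj),
      ?_⟩
    rw [hG.sub_add_lamOf (Nat.sub_lt_self hi.1 hi.2), Nat.sub_sub_self hi.2, hp]
  · rintro ⟨c, hc, rfl⟩
    have hck := hc.lt hk1
    have hi : k - c ∈ Icc 1 k := ⟨by omega, by omega⟩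
    rw [← Nat.sub_sub_self hck.le] at hc
    rw [hG.sub_add_lamOf hck]
    exact ⟨by simpa using hi,
      (hG.inv_succ_mem_right_iff hi).2 ((hG.isInnerCorner_sub_iff hkn hi).1 hc)⟩

end IsGrassmannian

/-- Let `w ∈ S_n` be Grassmannian with unique descent at `k`, with
partition `λ(w)` given by `λ_{k−i+1} = w(i) − i`.  Then the coessential set of
`v_P(w)` equals `{(k − c + λ_{c+1}, k) : c an inner corner of λ(w)}`, and the
corresponding rank numbers satisfy `r_{k−c+λ_{c+1}, k} = k − c`. -/
theorem coess_from_inner_corners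
    (n k : ℕ) (w v : Equiv.Perm ℕ)
    (hk1 : 1 ≤ k) (hkn : k < n)
    (hG : IsGrassmannian n k w)
    (hv : IsMaxRep (SP n k) w v) :
    Coess n v = {pq | ∃ c, IsInnerCorner n k w c ∧
        pq = (k - c + lamOf k w (c + 1), k)} ∧
    (∀ c, IsInnerCorner n k w c →
        rankNum v (k - c + lamOf k w (c + 1)) k = k - c) := by
  obtain ⟨⟨u, hu, rfl⟩, hdesc⟩ := hv
  have hstab {a b : ℕ} (h : ∀ j ∈ SP n k, j + 1 ≠ a ∧ j ≠ b) :
      u ∈ stabilizer (Perm ℕ) (Icc a b) :=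
    permParabolic_le_stabilizer_Icc h hu
  have hleft := hstab (a := 1) (b := k) fun j ⟨hj1, _, hjk⟩ => ⟨by omega, hjk⟩
  have hright := hstab (a := k + 1) (b := n) fun j ⟨_, hjn, hjk⟩ => ⟨by omega, by omega⟩
  have hall := hstab (a := 1) (b := n) fun j ⟨hj1, hjn, _⟩ => ⟨by omega, by omega⟩
  have hblock {a b : ℕ} (hab : u ∈ stabilizer (Perm ℕ) (Icc a b)) (x : ℕ) :
      (w * u)⁻¹ x ∈ Icc a b ↔ w⁻¹ x ∈ Icc a b :=
    Perm.mem_stabilizer_set_iff.1 (inv_mem hab) (w⁻¹ x)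
  refine ⟨Set.ext fun ⟨p, q⟩ => ?_, fun c hc => ?_⟩
  · rw [mem_coess_iff hk1 hkn (mul_mem hG.mem_stabilizer hall) hdesc, hblock hleft,
      hblock hright, hG.inv_mem_Icc_iff_exists_isInnerCorner hk1 hkn.le]
    simp only [mem_ofPred_eq, Prod.mk.injEq]
    constructor
    · rintro ⟨rfl, c, hc, rfl⟩
      exact ⟨c, hc, rfl, rfl⟩
    · rintro ⟨c, hc, rfl, rfl⟩
      exact ⟨rfl, c, hc, rfl⟩
  · have hck := hc.lt hk1
    rw [hG.sub_add_lamOf hck, rankNum_mul_of_mem_stabilizer hleft,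
      rankNum_apply_of_strictMonoOn hG.strictMonoOn_left_s17 ⟨by omega, by omega⟩]
end
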